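/- arXiv:1807.03518 — 9 statements merged into one kernel-verified Lean document; each statement's English description precedes it below -/
import Mathlib

section
/- Let Q₁ > 0, Q₂ > 0, P₀ ≥ 0 and ρ₁, ρ₂, η₁ be real numbers. Let S₁, S₂, X₀, Z be square-integrable real-valued random variables on a probability space with Var S₁ = Q₁, Var S₂ = Q₂, Var X₀ = P₀, Var Z = 1, Cov(S₁,S₂) = 0, Cov(X₀,S₁) = ρ₁√(P₀Q₁), Cov(X₀,S₂) = ρ₂√(P₀Q₂), and Cov(Z,X₀) = Cov(Z,S₁) = Cov(Z,S₂) = 0. Set Ỹ := η₁X₀ + S₁ + Z, σ² := η₁²P₀ + 2η₁ρ₁√(P₀Q₁) + Q₁ + 1, κ₁₁ := (η₁ρ₁√(P₀Q₁) + Q₁)/σ², and κ₁₂ := η₁ρ₂√(P₀Q₂)/σ². Then Var(S₁ − κ₁₁Ỹ)·Var(S₂ − κ₁₂Ỹ) − Cov(S₁ − κ₁₁Ỹ, S₂ − κ₁₂Ỹ)² = Q₁Q₂·((1 − ρ₁² − ρ₂²)η₁²P₀ + 1)/σ². (Note σ² = Var(η₁X₀ + S₁) + 1 > 0, so the division is well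 defined.) -/
open MeasureTheory ProbabilityTheory

/-- The covariance of two real-valued random variables. -/
noncomputable def cov {Ω : Type*} [MeasurableSpace Ω] (μ : Measure Ω) (X Y : Ω → ℝ) : ℝ :=
  ∫ ω, (X ω - ∫ x, X x ∂μ) * (Y ω - ∫ x, Y x ∂μ) ∂μ

section Helpers

variable {Ω : Type*} [MeasurableSpace Ω] {μ : Measure Ω}

lemma memLp_one_mul {X Y : Ω → ℝ} (hX : MemLp X 2 μ) (hY : MemLp Y 2 μ) :
    Integrable (fun ω => X ω * Y ω) μ := by
  rw [← memLp_one_iff_integrable]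
  have h : (fun ω => X ω * Y ω) = X • Y := rfl
  rw [h]
  exact hY.smul (r := 1) hX

lemma integrable_centered_mul [IsProbabilityMeasure μ] {X Y : Ω → ℝ}
    (hX : MemLp X 2 μ) (hY : MemLp Y 2 μ) :
    Integrable (fun ω => (X ω - ∫ x, X x ∂μ) * (Y ω - ∫ x, Y x ∂μ)) μ :=
  memLp_one_mul (hX.sub (memLp_const _)) (hY.sub (memLp_const _))

lemma cov_comm (X Y : Ω → ℝ) : cov μ X Y = cov μ Y X := by
  unfold cov; simp_rw [mul_comm]

lemma variance_eq_cov [IsProbabilityMeasure μ] (X : Ω → ℝ) (hX : MemLp X 2 μ) :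
    variance X μ = cov μ X X := by
  rw [variance_eq_integral hX.aestronglyMeasurable.aemeasurable]
  unfold cov
  congr 1
  funext ω
  simp [sq]

lemma cov_lin4_left [IsProbabilityMeasure μ] (a b c d : ℝ) (X Y Z W V : Ω → ℝ)
    (hX : MemLp X 2 μ) (hY : MemLp Y 2 μ) (hZ : MemLp Z 2 μ) (hW : MemLp W 2 μ)
    (hV : MemLp V 2 μ) :
    cov μ (fun ω => a * X ω + b * Y ω + c * Z ω + d * W ω) V
      = a * cov μ X V + b * cov μ Y V + c * cov μ Z V + d * cov μ W V := by
  unfold cov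
  have iX := (hX.integrable one_le_two).const_mul a
  have iY := (hY.integrable one_le_two).const_mul b
  have iZ := (hZ.integrable one_le_two).const_mul c
  have iW := (hW.integrable one_le_two).const_mul d
  have iXY : Integrable (fun x => a * X x + b * Y x) μ := iX.add iY
  have iXYZ : Integrable (fun x => a * X x + b * Y x + c * Z x) μ := iXY.add iZ
  have hm : ∫ x, (a * X x + b * Y x + c * Z x + d * W x) ∂μ
      = a * (∫ x, X x ∂μ) + b * (∫ x, Y x ∂μ) + c * (∫ x, Z x ∂μ) + d * (∫ x, W x ∂μ) := by
    rw [integral_add iXYZ iW, integral_add iXY iZ,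
      integral_add iX iY, integral_const_mul, integral_const_mul, integral_const_mul,
      integral_const_mul]
  have i1 := (integrable_centered_mul hX hV).const_mul a
  have i2 := (integrable_centered_mul hY hV).const_mul b
  have i3 := (integrable_centered_mul hZ hV).const_mul c
  have i4 := (integrable_centered_mul hW hV).const_mul d
  have i12 : Integrable (fun x => a * ((X x - ∫ x, X x ∂μ) * (V x - ∫ x, V x ∂μ))
      + b * ((Y x - ∫ x, Y x ∂μ) * (V x - ∫ x, V x ∂μ))) μ := i1.add i2
  have i123 : Integrable (fun x => a * ((X x - ∫ x, X x ∂μ) * (V x - ∫ x, V x ∂μ))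
      + b * ((Y x - ∫ x, Y x ∂μ) * (V x - ∫ x, V x ∂μ))
      + c * ((Z x - ∫ x, Z x ∂μ) * (V x - ∫ x, V x ∂μ))) μ := i12.add i3
  rw [← integral_const_mul a, ← integral_const_mul b, ← integral_const_mul c,
    ← integral_const_mul d, ← integral_add i1 i2, ← integral_add i12 i3,
    ← integral_add i123 i4]
  congr 1
  funext ω
  rw [hm]
  ring

lemma cov_lin4_right [IsProbabilityMeasure μ] (a b c d : ℝ) (X Y Z W V : Ω → ℝ)
    (hX : MemLp X 2 μ) (hY : MemLp Y 2 μ) (hZ : MemLp Z 2 μ) (hW : MemLp W 2 μ)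
    (hV : MemLp V 2 μ) :
    cov μ V (fun ω => a * X ω + b * Y ω + c * Z ω + d * W ω)
      = a * cov μ V X + b * cov μ V Y + c * cov μ V Z + d * cov μ V W := by
  rw [cov_comm, cov_lin4_left a b c d X Y Z W V hX hY hZ hW hV,
    cov_comm X V, cov_comm Y V, cov_comm Z V, cov_comm W V]

end Helpers

/-- The linear-estimation determinant computation of Appendix A:
`Var(S₁ − κ₁₁Ỹ)·Var(S₂ − κ₁₂Ỹ) − Cov(S₁ − κ₁₁Ỹ, S₂ − κ₁₂Ỹ)²
  = Q₁Q₂·((1 − ρ₁² − ρ₂²)η₁²P₀ + 1)/σ²` for the optimal `κ₁₁, κ₁₂`. -/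
theorem stmt_3 {Ω : Type*} [MeasurableSpace Ω] (μ : Measure Ω) [IsProbabilityMeasure μ]
    (Q₁ Q₂ P₀ ρ₁ ρ₂ η₁ : ℝ) (hQ₁ : 0 < Q₁) (hQ₂ : 0 < Q₂) (hP₀ : 0 ≤ P₀)
    (S₁ S₂ X₀ Z : Ω → ℝ)
    (hS₁m : Measurable S₁) (hS₂m : Measurable S₂) (hX₀m : Measurable X₀) (hZm : Measurable Z)
    (hS₁ : MemLp S₁ 2 μ) (hS₂ : MemLp S₂ 2 μ) (hX₀ : MemLp X₀ 2 μ) (hZ : MemLp Z 2 μ)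
    (hvS₁ : variance S₁ μ = Q₁) (hvS₂ : variance S₂ μ = Q₂)
    (hvX₀ : variance X₀ μ = P₀) (hvZ : variance Z μ = 1)
    (hS₁S₂ : cov μ S₁ S₂ = 0)
    (hX₀S₁ : cov μ X₀ S₁ = ρ₁ * Real.sqrt (P₀ * Q₁))
    (hX₀S₂ : cov μ X₀ S₂ = ρ₂ * Real.sqrt (P₀ * Q₂))
    (hZX₀ : cov μ Z X₀ = 0) (hZS₁ : cov μ Z S₁ = 0) (hZS₂ : cov μ Z S₂ = 0)
    (Ytil : Ω → ℝ) (hYtil : Ytil = fun ω => η₁ * X₀ ω + S₁ ω + Z ω)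
    (σ2 κ₁₁ κ₁₂ : ℝ)
    (hσ2 : σ2 = η₁ ^ 2 * P₀ + 2 * η₁ * ρ₁ * Real.sqrt (P₀ * Q₁) + Q₁ + 1)
    (hκ₁₁ : κ₁₁ = (η₁ * ρ₁ * Real.sqrt (P₀ * Q₁) + Q₁) / σ2)
    (hκ₁₂ : κ₁₂ = η₁ * ρ₂ * Real.sqrt (P₀ * Q₂) / σ2) :
    variance (fun ω => S₁ ω - κ₁₁ * Ytil ω) μ * variance (fun ω => S₂ ω - κ₁₂ * Ytil ω) μ
      - (cov μ (fun ω => S₁ ω - κ₁₁ * Ytil ω) (fun ω => S₂ ω - κ₁₂ * Ytil ω)) ^ 2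
      = Q₁ * Q₂ * ((1 - ρ₁ ^ 2 - ρ₂ ^ 2) * η₁ ^ 2 * P₀ + 1) / σ2 := by
  set s₁ := Real.sqrt (P₀ * Q₁) with hs₁def
  set s₂ := Real.sqrt (P₀ * Q₂) with hs₂def
  have hs₁sq : s₁ ^ 2 = P₀ * Q₁ := Real.sq_sqrt (by positivity)
  have hs₂sq : s₂ ^ 2 = P₀ * Q₂ := Real.sq_sqrt (by positivity)
  -- standardized covariances
  have hcX₀X₀ : cov μ X₀ X₀ = P₀ := by rw [← variance_eq_cov X₀ hX₀]; exact hvX₀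
  have hcS₁S₁ : cov μ S₁ S₁ = Q₁ := by rw [← variance_eq_cov S₁ hS₁]; exact hvS₁
  have hcS₂S₂ : cov μ S₂ S₂ = Q₂ := by rw [← variance_eq_cov S₂ hS₂]; exact hvS₂
  have hcZZ : cov μ Z Z = 1 := by rw [← variance_eq_cov Z hZ]; exact hvZ
  have hcS₁X₀ : cov μ S₁ X₀ = ρ₁ * s₁ := by rw [cov_comm]; exact hX₀S₁
  have hcS₂X₀ : cov μ S₂ X₀ = ρ₂ * s₂ := by rw [cov_comm]; exact hX₀S₂
  have hcX₀Z : cov μ X₀ Z = 0 := by rw [cov_comm]; exact hZX₀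
  have hcS₁Z : cov μ S₁ Z = 0 := by rw [cov_comm]; exact hZS₁
  have hcS₂Z : cov μ S₂ Z = 0 := by rw [cov_comm]; exact hZS₂
  have hcS₂S₁ : cov μ S₂ S₁ = 0 := by rw [cov_comm]; exact hS₁S₂
  -- generic combination
  set F : ℝ → ℝ → ℝ → ℝ → Ω → ℝ :=
    fun a b c d => (fun ω => a * X₀ ω + b * S₁ ω + c * S₂ ω + d * Z ω) with hF
  have hFmem : ∀ a b c d : ℝ, MemLp (F a b c d) 2 μ := by
    intro a b c d
    exact (((hX₀.const_mul a).add (hS₁.const_mul b)).add (hS₂.const_mul c)).add (hZ.const_mul d)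
  have master : ∀ a b c d e f g h : ℝ,
      cov μ (F a b c d) (F e f g h)
        = a * e * P₀ + (a * f + b * e) * (ρ₁ * s₁) + (a * g + c * e) * (ρ₂ * s₂)
          + b * f * Q₁ + c * g * Q₂ + d * h := by
    intro a b c d e f g h
    rw [hF]
    rw [cov_lin4_left a b c d X₀ S₁ S₂ Z _ hX₀ hS₁ hS₂ hZ (hFmem e f g h)]
    rw [cov_lin4_right e f g h X₀ S₁ S₂ Z X₀ hX₀ hS₁ hS₂ hZ hX₀,
      cov_lin4_right e f g h X₀ S₁ S₂ Z S₁ hX₀ hS₁ hS₂ hZ hS₁,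
      cov_lin4_right e f g h X₀ S₁ S₂ Z S₂ hX₀ hS₁ hS₂ hZ hS₂,
      cov_lin4_right e f g h X₀ S₁ S₂ Z Z hX₀ hS₁ hS₂ hZ hZ]
    rw [hcX₀X₀, hcS₁S₁, hcS₂S₂, hcZZ, hX₀S₁, hX₀S₂, hcS₁X₀, hcS₂X₀, hcX₀Z, hcS₁Z,
      hcS₂Z, hS₁S₂, hcS₂S₁, hZX₀, hZS₁, hZS₂]
    ring
  -- rewrite the two functions as combinations
  have hf1eq : (fun ω => S₁ ω - κ₁₁ * Ytil ω) = F (-(κ₁₁ * η₁)) (1 - κ₁₁) 0 (-κ₁₁) := by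
    funext ω; simp only [hYtil, hF]; ring
  have hf2eq : (fun ω => S₂ ω - κ₁₂ * Ytil ω) = F (-(κ₁₂ * η₁)) (-κ₁₂) 1 (-κ₁₂) := by
    funext ω; simp only [hYtil, hF]; ring
  -- positivity of σ2
  have hσpos : 0 < σ2 := by
    have hnn : 0 ≤ variance (F η₁ 1 0 0) μ := variance_nonneg _ μ
    rw [variance_eq_cov _ (hFmem η₁ 1 0 0), master] at hnn
    rw [hσ2]
    nlinarith [hnn]
  have hσne : σ2 ≠ 0 := ne_of_gt hσpos
  -- the three moments
  set C₁ := η₁ * ρ₁ * s₁ + Q₁ with hC₁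
  set B := η₁ * ρ₂ * s₂ with hB
  have hk1 : κ₁₁ * σ2 = C₁ := by rw [hκ₁₁]; field_simp
  have hk2 : κ₁₂ * σ2 = B := by rw [hκ₁₂]; field_simp
  have hV1 : variance (fun ω => S₁ ω - κ₁₁ * Ytil ω) μ = Q₁ - κ₁₁ * C₁ := by
    rw [hf1eq, variance_eq_cov _ (hFmem _ _ _ _), master]
    linear_combination (-(κ₁₁ ^ 2)) * hσ2 + κ₁₁ * hk1 + 2 * κ₁₁ * hC₁
  have hV2 : variance (fun ω => S₂ ω - κ₁₂ * Ytil ω) μ = Q₂ - κ₁₂ * B := by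
    rw [hf2eq, variance_eq_cov _ (hFmem _ _ _ _), master]
    linear_combination (-(κ₁₂ ^ 2)) * hσ2 + κ₁₂ * hk2 + 2 * κ₁₂ * hB
  have hC : cov μ (fun ω => S₁ ω - κ₁₁ * Ytil ω) (fun ω => S₂ ω - κ₁₂ * Ytil ω)
      = -(κ₁₂ * C₁) := by
    rw [hf1eq, hf2eq, master]
    linear_combination (-(κ₁₁ * κ₁₂)) * hσ2 + κ₁₂ * hC₁ + κ₁₁ * hk2 + κ₁₁ * hB
  rw [hV1, hV2, hC]
  rw [eq_div_iff hσne]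
  linear_combination (-(Q₁ * B)) * hk2 + (-(Q₂ * C₁)) * hk1 + κ₁₂ * B * C₁ * hk1
    + (-(κ₁₂ * C₁ ^ 2)) * hk2 + Q₁ * Q₂ * hσ2
    + (-(Q₁ * (B + η₁ * ρ₂ * s₂))) * hB
    + (-(Q₂ * (C₁ + (η₁ * ρ₁ * s₁ + Q₁)))) * hC₁
    + (-(Q₂ * η₁ ^ 2 * ρ₁ ^ 2)) * hs₁sq + (-(Q₁ * η₁ ^ 2 * ρ₂ ^ 2)) * hs₂sq
end

section
/- With the definitions in the context, choose α₁₁ := (1 + η₁β₁)η₁²γP'₀/(η₁²P'₀ + 1) and α₁₂ := β₂η₁³γP'₀/(η₁²P'₀ + 1). Then h₁ = η₁²γP'₀ · σ²_{Y₁|X₁} · (1 + η₁²(1−γ)P'₀) / (1 + η₁²P'₀). -/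
/-- With the dirty-paper choice `ᾱ₁ᵃ`, one has
`h₁ = η₁²γP'₀ · σ²_{Y₁|X₁} · (1 + η₁²(1−γ)P'₀) / (1 + η₁²P'₀)`. -/
theorem stmt_7 (η₁ P₀' P₁ Q₁ Q₂ β₁ β₂ γ : ℝ)
    (hη₁ : η₁ ≠ 0) (hP₀' : 0 < P₀') (hP₁ : 0 ≤ P₁) (hQ₁ : 0 < Q₁) (hQ₂ : 0 < Q₂)
    (hγ : γ ∈ Set.Icc (0 : ℝ) 1)
    (P₀ α₁₁ α₁₂ σY₁X₁ σU₁ σU₁Y₁ h₁ : ℝ)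
    (hP₀ : P₀ = P₀' + β₁ ^ 2 * Q₁ + β₂ ^ 2 * Q₂)
    (hα₁₁ : α₁₁ = (1 + η₁ * β₁) * η₁ ^ 2 * γ * P₀' / (η₁ ^ 2 * P₀' + 1))
    (hα₁₂ : α₁₂ = β₂ * η₁ ^ 3 * γ * P₀' / (η₁ ^ 2 * P₀' + 1))
    (hσY₁X₁ : σY₁X₁ = η₁ ^ 2 * P₀ + (2 * β₁ * η₁ + 1) * Q₁ + 1)
    (hσU₁ : σU₁ = η₁ ^ 2 * γ * P₀' + α₁₁ ^ 2 * Q₁ + α₁₂ ^ 2 * Q₂)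
    (hσU₁Y₁ : σU₁Y₁ = η₁ ^ 2 * γ * P₀' + (1 + β₁ * η₁) * α₁₁ * Q₁ + α₁₂ * β₂ * η₁ * Q₂)
    (hh₁ : h₁ = σY₁X₁ * σU₁ - σU₁Y₁ ^ 2) :
    h₁ = η₁ ^ 2 * γ * P₀' * σY₁X₁ * (1 + η₁ ^ 2 * (1 - γ) * P₀') / (1 + η₁ ^ 2 * P₀') := by
  have hd : η₁ ^ 2 * P₀' + 1 > 0 := by positivity
  subst hh₁ hσU₁Y₁ hσU₁ hσY₁X₁ hα₁₂ hα₁₁ hP₀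
  field_simp
  ring
end

section
/- With the definitions in the context and assuming additionally γ > 0, choose α₁₁ := (1 + η₁β₁)η₁²γP'₀/(η₁²P'₀ + 1) and α₁₂ := β₂η₁³γP'₀/(η₁²P'₀ + 1). Then f₁ = (1/2)·log(1 + P₁/(η₁²P₀ + (2β₁η₁ + 1)Q₁ + 1)) + (1/2)·log(1 + η₁²γP'₀/(1 + η₁²(1−γ)P'₀)). -/
/-- Closed-form evaluation `f₁(ᾱ₁ᵃ, β̄, γ)` (equation (10) of the paper): with the
dirty-paper choice `ᾱ₁ᵃ` and `γ > 0`,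
`f₁ = ½·log(1 + P₁/(η₁²P₀ + (2β₁η₁+1)Q₁ + 1)) + ½·log(1 + η₁²γP'₀/(1 + η₁²(1−γ)P'₀))`. -/
theorem stmt_8 (η₁ P₀' P₁ Q₁ Q₂ β₁ β₂ γ : ℝ)
    (hη₁ : η₁ ≠ 0) (hP₀' : 0 < P₀') (hP₁ : 0 ≤ P₁) (hQ₁ : 0 < Q₁) (hQ₂ : 0 < Q₂)
    (hγ : γ ∈ Set.Icc (0 : ℝ) 1) (hγpos : 0 < γ)
    (P₀ α₁₁ α₁₂ σY₁ σY₁X₁ σU₁ σU₁Y₁ h₁ f₁ : ℝ)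
    (hP₀ : P₀ = P₀' + β₁ ^ 2 * Q₁ + β₂ ^ 2 * Q₂)
    (hα₁₁ : α₁₁ = (1 + η₁ * β₁) * η₁ ^ 2 * γ * P₀' / (η₁ ^ 2 * P₀' + 1))
    (hα₁₂ : α₁₂ = β₂ * η₁ ^ 3 * γ * P₀' / (η₁ ^ 2 * P₀' + 1))
    (hσY₁ : σY₁ = η₁ ^ 2 * P₀ + (2 * β₁ * η₁ + 1) * Q₁ + P₁ + 1)
    (hσY₁X₁ : σY₁X₁ = η₁ ^ 2 * P₀ + (2 * β₁ * η₁ + 1) * Q₁ + 1)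
    (hσU₁ : σU₁ = η₁ ^ 2 * γ * P₀' + α₁₁ ^ 2 * Q₁ + α₁₂ ^ 2 * Q₂)
    (hσU₁Y₁ : σU₁Y₁ = η₁ ^ 2 * γ * P₀' + (1 + β₁ * η₁) * α₁₁ * Q₁ + α₁₂ * β₂ * η₁ * Q₂)
    (hh₁ : h₁ = σY₁X₁ * σU₁ - σU₁Y₁ ^ 2)
    (hf₁ : f₁ = 1 / 2 * Real.log (η₁ ^ 2 * γ * P₀' * σY₁ / h₁)) :
    f₁ = 1 / 2 * Real.log (1 + P₁ / (η₁ ^ 2 * P₀ + (2 * β₁ * η₁ + 1) * Q₁ + 1))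
      + 1 / 2 * Real.log (1 + η₁ ^ 2 * γ * P₀' / (1 + η₁ ^ 2 * (1 - γ) * P₀')) := by
  obtain ⟨hγ0, hγ1⟩ := hγ
  have hη2 : 0 < η₁ ^ 2 := by positivity
  have hD : (0:ℝ) < η₁ ^ 2 * P₀' + 1 := by positivity
  have hE : (0:ℝ) < 1 + η₁ ^ 2 * (1 - γ) * P₀' := by nlinarith
  have hX : (0:ℝ) < σY₁X₁ := by
    rw [hσY₁X₁, hP₀]; nlinarith [sq_nonneg (η₁ * β₁ + 1), sq_nonneg (η₁ * β₂)]
  have hσY₁' : σY₁ = σY₁X₁ + P₁ := by rw [hσY₁, hσY₁X₁]; ring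
  have hY : (0:ℝ) < σY₁ := by rw [hσY₁']; linarith
  have hDne : (η₁ ^ 2 * P₀' + 1) ≠ 0 := ne_of_gt hD
  have hh : h₁ = η₁ ^ 2 * γ * P₀' * σY₁X₁ * (1 + η₁ ^ 2 * (1 - γ) * P₀')
      / (η₁ ^ 2 * P₀' + 1) := by
    rw [hh₁, hσU₁, hσU₁Y₁, hα₁₁, hα₁₂, hσY₁X₁, hP₀]
    field_simp
    ring
  have hA : (0:ℝ) < 1 + P₁ / σY₁X₁ := by positivity
  have hB : (0:ℝ) < 1 + η₁ ^ 2 * γ * P₀' / (1 + η₁ ^ 2 * (1 - γ) * P₀') := by positivity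
  have harg : η₁ ^ 2 * γ * P₀' * σY₁ / h₁
      = (1 + P₁ / σY₁X₁) * (1 + η₁ ^ 2 * γ * P₀' / (1 + η₁ ^ 2 * (1 - γ) * P₀')) := by
    rw [hh, hσY₁']
    field_simp
    ring
  rw [hf₁, harg, Real.log_mul (ne_of_gt hA) (ne_of_gt hB), hσY₁X₁]
  ring
end

section
/- With the definitions in the context and assuming additionally γ > 0, choose α₁₁ := 1 + η₁β₁ and α₁₂ := η₁β₂. Then g₁ = (1/2)·log(1 + P₁/(1 + η₁²(1−γ)P'₀)). -/
/-- Closed-form evaluation `g₁(ᾱ₁ᵇ, β̄, γ)`: with the state-cancellation choice `ᾱ₁ᵇ`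
and `γ > 0`, `g₁ = ½·log(1 + P₁/(1 + η₁²(1−γ)P'₀))`. -/
theorem stmt_9 (η₁ P₀' P₁ Q₁ Q₂ β₁ β₂ γ : ℝ)
    (hη₁ : η₁ ≠ 0) (hP₀' : 0 < P₀') (hP₁ : 0 ≤ P₁) (hQ₁ : 0 < Q₁) (hQ₂ : 0 < Q₂)
    (hγ : γ ∈ Set.Icc (0 : ℝ) 1) (hγpos : 0 < γ)
    (P₀ α₁₁ α₁₂ σY₁X₁ σU₁ σU₁Y₁ h₁ g₁ : ℝ)
    (hP₀ : P₀ = P₀' + β₁ ^ 2 * Q₁ + β₂ ^ 2 * Q₂)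
    (hα₁₁ : α₁₁ = 1 + η₁ * β₁)
    (hα₁₂ : α₁₂ = η₁ * β₂)
    (hσY₁X₁ : σY₁X₁ = η₁ ^ 2 * P₀ + (2 * β₁ * η₁ + 1) * Q₁ + 1)
    (hσU₁ : σU₁ = η₁ ^ 2 * γ * P₀' + α₁₁ ^ 2 * Q₁ + α₁₂ ^ 2 * Q₂)
    (hσU₁Y₁ : σU₁Y₁ = η₁ ^ 2 * γ * P₀' + (1 + β₁ * η₁) * α₁₁ * Q₁ + α₁₂ * β₂ * η₁ * Q₂)
    (hh₁ : h₁ = σY₁X₁ * σU₁ - σU₁Y₁ ^ 2)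
    (hg₁ : g₁ = 1 / 2 * Real.log (1 + P₁ * σU₁ / h₁)) :
    g₁ = 1 / 2 * Real.log (1 + P₁ / (1 + η₁ ^ 2 * (1 - γ) * P₀')) := by
  obtain ⟨hγ0, hγ1⟩ := hγ
  subst hP₀ hα₁₁ hα₁₂ hσY₁X₁ hσU₁ hσU₁Y₁ hh₁ hg₁
  have hσpos : 0 < η₁ ^ 2 * γ * P₀' + (1 + η₁ * β₁) ^ 2 * Q₁ + (η₁ * β₂) ^ 2 * Q₂ := by
    have : 0 < η₁ ^ 2 * γ * P₀' := by positivity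
    nlinarith [sq_nonneg (1 + η₁ * β₁), sq_nonneg (η₁ * β₂)]
  have hdpos : 0 < 1 + η₁ ^ 2 * (1 - γ) * P₀' := by
    nlinarith [mul_nonneg (mul_nonneg (sq_nonneg η₁) (by linarith : (0:ℝ) ≤ 1 - γ)) hP₀'.le]
  have key : (η₁ ^ 2 * (P₀' + β₁ ^ 2 * Q₁ + β₂ ^ 2 * Q₂) + (2 * β₁ * η₁ + 1) * Q₁ + 1) *
      (η₁ ^ 2 * γ * P₀' + (1 + η₁ * β₁) ^ 2 * Q₁ + (η₁ * β₂) ^ 2 * Q₂) -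
      (η₁ ^ 2 * γ * P₀' + (1 + β₁ * η₁) * (1 + η₁ * β₁) * Q₁ + η₁ * β₂ * β₂ * η₁ * Q₂) ^ 2 =
      (η₁ ^ 2 * γ * P₀' + (1 + η₁ * β₁) ^ 2 * Q₁ + (η₁ * β₂) ^ 2 * Q₂) *
      (1 + η₁ ^ 2 * (1 - γ) * P₀') := by ring
  rw [key]
  congr 2
  rw [mul_comm (η₁ ^ 2 * γ * P₀' + (1 + η₁ * β₁) ^ 2 * Q₁ + (η₁ * β₂) ^ 2 * Q₂)
      (1 + η₁ ^ 2 * (1 - γ) * P₀'),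
    mul_div_mul_right _ _ hσpos.ne']
end

section
/- With the definitions in the context, choose α₂₀ := η₂²γ̄P'₀/(η₂²γ̄P'₀ + 1), α₂₁ := β₁η₂³γ̄P'₀/(η₂²γ̄P'₀ + 1), and α₂₂ := (1 + η₂β₂)η₂²γ̄P'₀/(η₂²γ̄P'₀ + 1). Then h₂ = η₂²γ̄P'₀ · σ²_{Y₂|X₂} / (1 + η₂²γ̄P'₀). -/
/-- With the dirty-paper choice `ᾱ₂ᵃ`, one has
`h₂ = η₂²γ̄P'₀ · σ²_{Y₂|X₂} / (1 + η₂²γ̄P'₀)`, where `γ̄ = 1 − γ`. -/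
theorem stmt_10 (η₂ P₀' P₂ Q₁ Q₂ β₁ β₂ γ : ℝ)
    (hη₂ : η₂ ≠ 0) (hP₀' : 0 < P₀') (hP₂ : 0 ≤ P₂) (hQ₁ : 0 < Q₁) (hQ₂ : 0 < Q₂)
    (hγ : γ ∈ Set.Icc (0 : ℝ) 1)
    (γbar P₀ α₂₀ α₂₁ α₂₂ σY₂X₂ σU₂ σU₂Y₂ h₂ : ℝ)
    (hγbar : γbar = 1 - γ)
    (hP₀ : P₀ = P₀' + β₁ ^ 2 * Q₁ + β₂ ^ 2 * Q₂)
    (hα₂₀ : α₂₀ = η₂ ^ 2 * γbar * P₀' / (η₂ ^ 2 * γbar * P₀' + 1))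
    (hα₂₁ : α₂₁ = β₁ * η₂ ^ 3 * γbar * P₀' / (η₂ ^ 2 * γbar * P₀' + 1))
    (hα₂₂ : α₂₂ = (1 + η₂ * β₂) * η₂ ^ 2 * γbar * P₀' / (η₂ ^ 2 * γbar * P₀' + 1))
    (hσY₂X₂ : σY₂X₂ = η₂ ^ 2 * P₀ + (2 * β₂ * η₂ + 1) * Q₂ + 1)
    (hσU₂ : σU₂ = η₂ ^ 2 * (γbar + α₂₀ ^ 2 * γ) * P₀' + α₂₁ ^ 2 * Q₁ + α₂₂ ^ 2 * Q₂)
    (hσU₂Y₂ : σU₂Y₂ = η₂ ^ 2 * (γbar * P₀' + α₂₀ * γ * P₀') + α₂₂ * (1 + β₂ * η₂) * Q₂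
      + α₂₁ * β₁ * η₂ * Q₁)
    (hh₂ : h₂ = σY₂X₂ * σU₂ - σU₂Y₂ ^ 2) :
    h₂ = η₂ ^ 2 * γbar * P₀' * σY₂X₂ / (1 + η₂ ^ 2 * γbar * P₀') := by
  have hd : η₂ ^ 2 * γbar * P₀' + 1 > 0 := by
    have : 0 ≤ η₂ ^ 2 * γbar * P₀' := by
      apply mul_nonneg (mul_nonneg (sq_nonneg _) _) hP₀'.le
      simp [hγbar]; exact hγ.2
    linarith
  have hd' : η₂ ^ 2 * γbar * P₀' + 1 ≠ 0 := ne_of_gt hd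
  have hd'' : (1:ℝ) + η₂ ^ 2 * γbar * P₀' ≠ 0 := by linarith
  subst hh₂ hσU₂Y₂ hσU₂ hσY₂X₂ hα₂₂ hα₂₁ hα₂₀ hP₀
  have hd3 : η₂ ^ 2 * P₀' * γbar + 1 ≠ 0 := by linarith
  have hd4 : 1 + η₂ ^ 2 * P₀' * γbar ≠ 0 := by linarith
  field_simp
  subst hγbar
  ring
end

section
/- With the definitions in the context and assuming additionally γ < 1, choose α₂₀ := η₂²γ̄P'₀/(η₂²γ̄P'₀ + 1), α₂₁ := β₁η₂³γ̄P'₀/(η₂²γ̄P'₀ + 1), and α₂₂ := (1 + η₂β₂)η₂²γ̄P'₀/(η₂²γ̄P'₀ + 1). Then f₂ = (1/2)·log(1 + P₂/(η₂²P₀ + (2β₂η₂ + 1)Q₂ + 1)) + (1/2)·log(1 + η₂²γ̄P'₀). -/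
/-- Closed-form evaluation `f₂(ᾱ₂ᵃ, β̄, γ)` (equation (13) of the paper): with the
dirty-paper choice `ᾱ₂ᵃ` and `γ < 1`,
`f₂ = ½·log(1 + P₂/(η₂²P₀ + (2β₂η₂+1)Q₂ + 1)) + ½·log(1 + η₂²γ̄P'₀)`. -/
theorem stmt_11 (η₂ P₀' P₂ Q₁ Q₂ β₁ β₂ γ : ℝ)
    (hη₂ : η₂ ≠ 0) (hP₀' : 0 < P₀') (hP₂ : 0 ≤ P₂) (hQ₁ : 0 < Q₁) (hQ₂ : 0 < Q₂)
    (hγ : γ ∈ Set.Icc (0 : ℝ) 1) (hγlt : γ < 1)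
    (γbar P₀ α₂₀ α₂₁ α₂₂ σY₂ σY₂X₂ σU₂ σU₂Y₂ h₂ f₂ : ℝ)
    (hγbar : γbar = 1 - γ)
    (hP₀ : P₀ = P₀' + β₁ ^ 2 * Q₁ + β₂ ^ 2 * Q₂)
    (hα₂₀ : α₂₀ = η₂ ^ 2 * γbar * P₀' / (η₂ ^ 2 * γbar * P₀' + 1))
    (hα₂₁ : α₂₁ = β₁ * η₂ ^ 3 * γbar * P₀' / (η₂ ^ 2 * γbar * P₀' + 1))
    (hα₂₂ : α₂₂ = (1 + η₂ * β₂) * η₂ ^ 2 * γbar * P₀' / (η₂ ^ 2 * γbar * P₀' + 1))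
    (hσY₂ : σY₂ = η₂ ^ 2 * P₀ + (2 * β₂ * η₂ + 1) * Q₂ + P₂ + 1)
    (hσY₂X₂ : σY₂X₂ = η₂ ^ 2 * P₀ + (2 * β₂ * η₂ + 1) * Q₂ + 1)
    (hσU₂ : σU₂ = η₂ ^ 2 * (γbar + α₂₀ ^ 2 * γ) * P₀' + α₂₁ ^ 2 * Q₁ + α₂₂ ^ 2 * Q₂)
    (hσU₂Y₂ : σU₂Y₂ = η₂ ^ 2 * (γbar * P₀' + α₂₀ * γ * P₀') + α₂₂ * (1 + β₂ * η₂) * Q₂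
      + α₂₁ * β₁ * η₂ * Q₁)
    (hh₂ : h₂ = σY₂X₂ * σU₂ - σU₂Y₂ ^ 2)
    (hf₂ : f₂ = 1 / 2 * Real.log (η₂ ^ 2 * γbar * P₀' * σY₂ / h₂)) :
    f₂ = 1 / 2 * Real.log (1 + P₂ / (η₂ ^ 2 * P₀ + (2 * β₂ * η₂ + 1) * Q₂ + 1))
      + 1 / 2 * Real.log (1 + η₂ ^ 2 * γbar * P₀') := by
  have hγb : 0 < γbar := by rw [hγbar]; linarith
  have hs : 0 < η₂ ^ 2 * γbar * P₀' := by positivity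
  have hd : 0 < η₂ ^ 2 * γbar * P₀' + 1 := by linarith
  have hd' : η₂ ^ 2 * γbar * P₀' + 1 ≠ 0 := ne_of_gt hd
  have hσYX : 0 < σY₂X₂ := by
    have : σY₂X₂ = η₂ ^ 2 * P₀' + (β₁ * η₂) ^ 2 * Q₁ + (β₂ * η₂ + 1) ^ 2 * Q₂ + 1 := by
      rw [hσY₂X₂, hP₀]; ring
    rw [this]; positivity
  have hσY : 0 < σY₂ := by
    have : σY₂ = σY₂X₂ + P₂ := by rw [hσY₂, hσY₂X₂]; ring
    rw [this]; linarith
  have hh : h₂ = η₂ ^ 2 * γbar * P₀' * σY₂X₂ / (η₂ ^ 2 * γbar * P₀' + 1) := by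
    rw [hh₂, hσU₂, hσU₂Y₂, hα₂₀, hα₂₁, hα₂₂, hσY₂X₂, hP₀]
    have hγ' : γ = 1 - γbar := by linarith
    field_simp
    rw [hγ']
    ring
  have hh₂pos : 0 < h₂ := by rw [hh]; positivity
  have key : η₂ ^ 2 * γbar * P₀' * σY₂ / h₂
      = (σY₂ / σY₂X₂) * (η₂ ^ 2 * γbar * P₀' + 1) := by
    rw [hh]
    field_simp
  have h1 : (1 : ℝ) + P₂ / (η₂ ^ 2 * P₀ + (2 * β₂ * η₂ + 1) * Q₂ + 1) = σY₂ / σY₂X₂ := by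
    rw [← hσY₂X₂, show σY₂ = σY₂X₂ + P₂ by rw [hσY₂, hσY₂X₂]; ring]
    field_simp
  rw [hf₂, key, h1]
  rw [Real.log_mul (by positivity) (by linarith), mul_add]
  ring_nf
end

section
/- With the definitions in the context, choose α₂₀ := 1, α₂₁ := η₂β₁, and α₂₂ := 1 + η₂β₂. Then g₂ = (1/2)·log(1 + P₂). -/
/-- Closed-form evaluation `g₂(ᾱ₂ᵇ, β̄, γ)`: with the state-cancellation choice `ᾱ₂ᵇ`,
`g₂ = ½·log(1 + P₂)`, the interference-free point-to-point rate of Receiver 2. -/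
theorem stmt_12 (η₂ P₀' P₂ Q₁ Q₂ β₁ β₂ γ : ℝ)
    (hη₂ : η₂ ≠ 0) (hP₀' : 0 < P₀') (hP₂ : 0 ≤ P₂) (hQ₁ : 0 < Q₁) (hQ₂ : 0 < Q₂)
    (hγ : γ ∈ Set.Icc (0 : ℝ) 1)
    (γbar P₀ α₂₀ α₂₁ α₂₂ σY₂X₂ σU₂ σU₂Y₂ h₂ g₂ : ℝ)
    (hγbar : γbar = 1 - γ)
    (hP₀ : P₀ = P₀' + β₁ ^ 2 * Q₁ + β₂ ^ 2 * Q₂)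
    (hα₂₀ : α₂₀ = 1)
    (hα₂₁ : α₂₁ = η₂ * β₁)
    (hα₂₂ : α₂₂ = 1 + η₂ * β₂)
    (hσY₂X₂ : σY₂X₂ = η₂ ^ 2 * P₀ + (2 * β₂ * η₂ + 1) * Q₂ + 1)
    (hσU₂ : σU₂ = η₂ ^ 2 * (γbar + α₂₀ ^ 2 * γ) * P₀' + α₂₁ ^ 2 * Q₁ + α₂₂ ^ 2 * Q₂)
    (hσU₂Y₂ : σU₂Y₂ = η₂ ^ 2 * (γbar * P₀' + α₂₀ * γ * P₀') + α₂₂ * (1 + β₂ * η₂) * Q₂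
      + α₂₁ * β₁ * η₂ * Q₁)
    (hh₂ : h₂ = σY₂X₂ * σU₂ - σU₂Y₂ ^ 2)
    (hg₂ : g₂ = 1 / 2 * Real.log (1 + P₂ * σU₂ / h₂)) :
    g₂ = 1 / 2 * Real.log (1 + P₂) := by
  have hU : σU₂ = η₂ ^ 2 * P₀' + (η₂ * β₁) ^ 2 * Q₁ + (1 + η₂ * β₂) ^ 2 * Q₂ := by
    subst hσU₂ hα₂₀ hα₂₁ hα₂₂ hγbar; ring
  have hUpos : 0 < σU₂ := by
    rw [hU]
    have : 0 < η₂ ^ 2 * P₀' := by positivity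
    nlinarith [sq_nonneg (η₂ * β₁), sq_nonneg (1 + η₂ * β₂), hQ₁.le, hQ₂.le]
  have hh : h₂ = σU₂ := by
    subst hh₂ hσY₂X₂ hσU₂Y₂ hσU₂ hα₂₀ hα₂₁ hα₂₂ hγbar hP₀; ring
  rw [hg₂, hh, mul_div_assoc, div_self hUpos.ne', mul_one]
end

section
/- Fix real numbers η₁ ≠ 0, P₀ > 0, P₁ ≥ 0, Q₁ > 0, Q₂ > 0 and ρ₁, ρ₂ with ρ₁² + ρ₂² < 1. Set β₁ := ρ₁√(P₀/Q₁), β₂ := ρ₂√(P₀/Q₂), P'₀ := P₀ − β₁²Q₁ − β₂²Q₂, γ := 1, α₁₁ := (1 + η₁β₁)η₁²γP'₀/(η₁²P'₀ + 1), α₁₂ := β₂η₁³γP'₀/(η₁²P'₀ + 1), σ²_{Y₁} := η₁²P₀ + (2β₁η₁ + 1)Q₁ + P₁ + 1, σ²_{Y₁|X₁} := η₁²P₀ + (2β₁η₁ + 1)Q₁ + 1, σ²_{U₁} := η₁²γP'₀ + α₁₁²Q₁ + α₁₂²Q₂, σ_{U₁Y₁} := η₁²γP'₀ + (1 + β₁η₁)α₁₁Q₁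 + α₁₂β₂η₁Q₂, h₁ := σ²_{Y₁|X₁}·σ²_{U₁} − σ_{U₁Y₁}², and f₁ := (1/2)·log(η₁²γP'₀·σ²_{Y₁}/h₁). Then f₁ = (1/2)·log(1 + P₁/(η₁²P₀ + 2η₁ρ₁√(P₀Q₁) + Q₁ + 1)) + (1/2)·log((1 − ρ₁² − ρ₂²)η₁²P₀ + 1). -/
private lemma stmt_14_aux (a b c d : ℝ) (ha : a ≠ 0) (hb : b ≠ 0) (hd : d ≠ 0) :
    a * c / (a * b / d) = c / b * d := by
  field_simp

/-- At `γ = 1` with the identification `βⱼ = ρⱼ√(P₀/Qⱼ)`, the achievable rate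
`f₁(ᾱ₁ᵃ, β̄, 1)` coincides with the first term of the outer bound on `R₁`:
`f₁ = ½·log(1 + P₁/(η₁²P₀ + 2η₁ρ₁√(P₀Q₁) + Q₁ + 1)) + ½·log((1 − ρ₁² − ρ₂²)η₁²P₀ + 1)`. -/
theorem stmt_14 (η₁ P₀ P₁ Q₁ Q₂ ρ₁ ρ₂ : ℝ)
    (hη₁ : η₁ ≠ 0) (hP₀ : 0 < P₀) (hP₁ : 0 ≤ P₁) (hQ₁ : 0 < Q₁) (hQ₂ : 0 < Q₂)
    (hρ : ρ₁ ^ 2 + ρ₂ ^ 2 < 1)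
    (β₁ β₂ P₀' γ α₁₁ α₁₂ σY₁ σY₁X₁ σU₁ σU₁Y₁ h₁ f₁ : ℝ)
    (hβ₁ : β₁ = ρ₁ * Real.sqrt (P₀ / Q₁)) (hβ₂ : β₂ = ρ₂ * Real.sqrt (P₀ / Q₂))
    (hP₀' : P₀' = P₀ - β₁ ^ 2 * Q₁ - β₂ ^ 2 * Q₂)
    (hγ : γ = 1)
    (hα₁₁ : α₁₁ = (1 + η₁ * β₁) * η₁ ^ 2 * γ * P₀' / (η₁ ^ 2 * P₀' + 1))
    (hα₁₂ : α₁₂ = β₂ * η₁ ^ 3 * γ * P₀' / (η₁ ^ 2 * P₀' + 1))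
    (hσY₁ : σY₁ = η₁ ^ 2 * P₀ + (2 * β₁ * η₁ + 1) * Q₁ + P₁ + 1)
    (hσY₁X₁ : σY₁X₁ = η₁ ^ 2 * P₀ + (2 * β₁ * η₁ + 1) * Q₁ + 1)
    (hσU₁ : σU₁ = η₁ ^ 2 * γ * P₀' + α₁₁ ^ 2 * Q₁ + α₁₂ ^ 2 * Q₂)
    (hσU₁Y₁ : σU₁Y₁ = η₁ ^ 2 * γ * P₀' + (1 + β₁ * η₁) * α₁₁ * Q₁ + α₁₂ * β₂ * η₁ * Q₂)
    (hh₁ : h₁ = σY₁X₁ * σU₁ - σU₁Y₁ ^ 2)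
    (hf₁ : f₁ = 1 / 2 * Real.log (η₁ ^ 2 * γ * P₀' * σY₁ / h₁)) :
    f₁ = 1 / 2 * Real.log (1 + P₁ / (η₁ ^ 2 * P₀ + 2 * η₁ * ρ₁ * Real.sqrt (P₀ * Q₁) + Q₁ + 1))
      + 1 / 2 * Real.log ((1 - ρ₁ ^ 2 - ρ₂ ^ 2) * η₁ ^ 2 * P₀ + 1) := by
  have hQ1ne : Q₁ ≠ 0 := ne_of_gt hQ₁
  have hQ2ne : Q₂ ≠ 0 := ne_of_gt hQ₂
  have hb1sq : β₁ ^ 2 * Q₁ = ρ₁ ^ 2 * P₀ := by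
    rw [hβ₁, mul_pow, Real.sq_sqrt (by positivity : (0:ℝ) ≤ P₀ / Q₁)]
    field_simp
  have hb2sq : β₂ ^ 2 * Q₂ = ρ₂ ^ 2 * P₀ := by
    rw [hβ₂, mul_pow, Real.sq_sqrt (by positivity : (0:ℝ) ≤ P₀ / Q₂)]
    field_simp
  have hb1Q : β₁ * Q₁ = ρ₁ * Real.sqrt (P₀ * Q₁) := by
    have h1 : P₀ * Q₁ = (P₀ / Q₁) * Q₁ ^ 2 := by field_simp
    rw [hβ₁, h1, Real.sqrt_mul (by positivity), Real.sqrt_sq hQ₁.le, mul_assoc]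
  have hP0eq : P₀' = (1 - ρ₁ ^ 2 - ρ₂ ^ 2) * P₀ := by
    rw [hP₀']; linear_combination - hb1sq - hb2sq
  have hP0'pos : 0 < P₀' := by rw [hP0eq]; nlinarith
  have hDpos : 0 < η₁ ^ 2 * P₀' + 1 := by positivity
  have hDne : η₁ ^ 2 * P₀' + 1 ≠ 0 := ne_of_gt hDpos
  have hP0rw : P₀ = P₀' + β₁ ^ 2 * Q₁ + β₂ ^ 2 * Q₂ := by rw [hP₀']; ring
  have hXpos : 0 < σY₁X₁ := by
    rw [hσY₁X₁, hP0rw]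
    nlinarith [mul_nonneg hQ₁.le (sq_nonneg (1 + η₁ * β₁)),
      mul_nonneg hQ₂.le (sq_nonneg (η₁ * β₂)),
      mul_nonneg (sq_nonneg η₁) hP0'pos.le]
  have hA : α₁₁ * (η₁ ^ 2 * P₀' + 1) = (1 + η₁ * β₁) * η₁ ^ 2 * P₀' := by
    rw [hα₁₁, hγ]; field_simp
  have hB : α₁₂ * (η₁ ^ 2 * P₀' + 1) = β₂ * η₁ ^ 3 * P₀' := by
    rw [hα₁₂, hγ]; field_simp
  have hU : σU₁ * (η₁ ^ 2 * P₀' + 1) ^ 2 =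
      η₁ ^ 2 * P₀' * (η₁ ^ 2 * P₀' + 1) ^ 2
        + ((1 + η₁ * β₁) * η₁ ^ 2 * P₀') ^ 2 * Q₁ + (β₂ * η₁ ^ 3 * P₀') ^ 2 * Q₂ := by
    rw [hσU₁, hγ]
    linear_combination (α₁₁ * (η₁ ^ 2 * P₀' + 1) + (1 + η₁ * β₁) * η₁ ^ 2 * P₀') * Q₁ * hA
      + (α₁₂ * (η₁ ^ 2 * P₀' + 1) + β₂ * η₁ ^ 3 * P₀') * Q₂ * hB
  have hUY : σU₁Y₁ * (η₁ ^ 2 * P₀' + 1) =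
      η₁ ^ 2 * P₀' * (η₁ ^ 2 * P₀' + 1)
        + (1 + β₁ * η₁) * ((1 + η₁ * β₁) * η₁ ^ 2 * P₀') * Q₁
        + (β₂ * η₁ ^ 3 * P₀') * β₂ * η₁ * Q₂ := by
    rw [hσU₁Y₁, hγ]
    linear_combination (1 + β₁ * η₁) * Q₁ * hA + β₂ * η₁ * Q₂ * hB
  have key : h₁ * (η₁ ^ 2 * P₀' + 1) ^ 2 = η₁ ^ 2 * P₀' * σY₁X₁ * (η₁ ^ 2 * P₀' + 1) := by
    have expand : h₁ * (η₁ ^ 2 * P₀' + 1) ^ 2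
        = σY₁X₁ * (σU₁ * (η₁ ^ 2 * P₀' + 1) ^ 2) - (σU₁Y₁ * (η₁ ^ 2 * P₀' + 1)) ^ 2 := by
      rw [hh₁]; ring
    rw [expand, hU, hUY, hσY₁X₁, hP0rw]
    ring
  have key' : h₁ * (η₁ ^ 2 * P₀' + 1) = η₁ ^ 2 * P₀' * σY₁X₁ :=
    mul_right_cancel₀ hDne (by linear_combination key)
  have hh : h₁ = η₁ ^ 2 * P₀' * σY₁X₁ / (η₁ ^ 2 * P₀' + 1) :=
    (eq_div_iff hDne).mpr key'
  have hYeq : σY₁ = σY₁X₁ + P₁ := by rw [hσY₁, hσY₁X₁]; ring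
  have hYpos : 0 < σY₁ := by rw [hYeq]; linarith
  have harg : η₁ ^ 2 * γ * P₀' * σY₁ / h₁ = (σY₁ / σY₁X₁) * (η₁ ^ 2 * P₀' + 1) := by
    rw [hh, hγ, mul_one]
    exact stmt_14_aux _ _ _ _ (by positivity) (ne_of_gt hXpos) hDne
  have hden : η₁ ^ 2 * P₀ + 2 * η₁ * ρ₁ * Real.sqrt (P₀ * Q₁) + Q₁ + 1 = σY₁X₁ := by
    rw [hσY₁X₁]; linear_combination (-2 * η₁) * hb1Q
  have h1pl : 1 + P₁ / (η₁ ^ 2 * P₀ + 2 * η₁ * ρ₁ * Real.sqrt (P₀ * Q₁) + Q₁ + 1)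
      = σY₁ / σY₁X₁ := by
    rw [hden, hYeq]
    field_simp
  have hDrw : (1 - ρ₁ ^ 2 - ρ₂ ^ 2) * η₁ ^ 2 * P₀ + 1 = η₁ ^ 2 * P₀' + 1 := by
    rw [hP0eq]; ring
  rw [hf₁, harg, h1pl, hDrw, Real.log_mul (by positivity) hDne]
  ring
end

section
/- Fix real numbers η₂ ≠ 0, P₀ > 0, P₂ ≥ 0, Q₁ > 0, Q₂ > 0 and ρ₁, ρ₂ with ρ₁² + ρ₂² < 1. Set β₁ := ρ₁√(P₀/Q₁), β₂ := ρ₂√(P₀/Q₂), P'₀ := P₀ − β₁²Q₁ − β₂²Q₂, γ := 0, γ̄ := 1, α₂₀ := η₂²γ̄P'₀/(η₂²γ̄P'₀ + 1), α₂₁ := β₁η₂³γ̄P'₀/(η₂²γ̄P'₀ + 1), α₂₂ := (1 + η₂β₂)η₂²γ̄P'₀/(η₂²γ̄P'₀ + 1), σ²_{Y₂} := η₂²P₀ + (2β₂η₂ + 1)Q₂ + P₂ + 1, σ²_{Y₂|X₂} := η₂²P₀ + (2β₂η₂ + 1)Q₂ + 1, σ²_{U₂} := η₂²(γ̄ + α₂₀²γ)P'₀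 + α₂₁²Q₁ + α₂₂²Q₂, σ_{U₂Y₂} := η₂²(γ̄P'₀ + α₂₀γP'₀) + α₂₂(1 + β₂η₂)Q₂ + α₂₁β₁η₂Q₁, h₂ := σ²_{Y₂|X₂}·σ²_{U₂} − σ_{U₂Y₂}², and f₂ := (1/2)·log(η₂²γ̄P'₀·σ²_{Y₂}/h₂). Then f₂ = (1/2)·log(1 + P₂/(η₂²P₀ + 2η₂ρ₂√(P₀Q₂) + Q₂ + 1)) + (1/2)·log((1 − ρ₁² − ρ₂²)η₂²P₀ + 1). -/
private lemma stmt_15_aux1 (s a b Q₁ Q₂ : ℝ) (hs1 : s + 1 ≠ 0) :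
    (s + (a ^ 2 * Q₁ + b ^ 2 * Q₂) + 1) *
        (s + (a * s / (s + 1)) ^ 2 * Q₁ + (b * s / (s + 1)) ^ 2 * Q₂)
      - (s + (b * s / (s + 1)) * b * Q₂ + (a * s / (s + 1)) * a * Q₁) ^ 2
    = s * (s + (a ^ 2 * Q₁ + b ^ 2 * Q₂) + 1) / (s + 1) := by
  field_simp
  ring

private lemma stmt_15_aux2 (s D P₂ : ℝ) (hs : s ≠ 0) (hD : D ≠ 0) (hs1 : s + 1 ≠ 0) :
    s * (D + P₂) / (s * D / (s + 1)) = (1 + P₂ / D) * (s + 1) := by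
  field_simp


/-- At `γ = 0` with the identification `βⱼ = ρⱼ√(P₀/Qⱼ)`, the achievable rate
`f₂(ᾱ₂ᵃ, β̄, 0)` coincides with the first term of the outer bound on `R₂`:
`f₂ = ½·log(1 + P₂/(η₂²P₀ + 2η₂ρ₂√(P₀Q₂) + Q₂ + 1)) + ½·log((1 − ρ₁² − ρ₂²)η₂²P₀ + 1)`. -/
theorem stmt_15 (η₂ P₀ P₂ Q₁ Q₂ ρ₁ ρ₂ : ℝ)
    (hη₂ : η₂ ≠ 0) (hP₀ : 0 < P₀) (hP₂ : 0 ≤ P₂) (hQ₁ : 0 < Q₁) (hQ₂ : 0 < Q₂)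
    (hρ : ρ₁ ^ 2 + ρ₂ ^ 2 < 1)
    (β₁ β₂ P₀' γ γbar α₂₀ α₂₁ α₂₂ σY₂ σY₂X₂ σU₂ σU₂Y₂ h₂ f₂ : ℝ)
    (hβ₁ : β₁ = ρ₁ * Real.sqrt (P₀ / Q₁)) (hβ₂ : β₂ = ρ₂ * Real.sqrt (P₀ / Q₂))
    (hP₀' : P₀' = P₀ - β₁ ^ 2 * Q₁ - β₂ ^ 2 * Q₂)
    (hγ : γ = 0) (hγbar : γbar = 1)
    (hα₂₀ : α₂₀ = η₂ ^ 2 * γbar * P₀' / (η₂ ^ 2 * γbar * P₀' + 1))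
    (hα₂₁ : α₂₁ = β₁ * η₂ ^ 3 * γbar * P₀' / (η₂ ^ 2 * γbar * P₀' + 1))
    (hα₂₂ : α₂₂ = (1 + η₂ * β₂) * η₂ ^ 2 * γbar * P₀' / (η₂ ^ 2 * γbar * P₀' + 1))
    (hσY₂ : σY₂ = η₂ ^ 2 * P₀ + (2 * β₂ * η₂ + 1) * Q₂ + P₂ + 1)
    (hσY₂X₂ : σY₂X₂ = η₂ ^ 2 * P₀ + (2 * β₂ * η₂ + 1) * Q₂ + 1)
    (hσU₂ : σU₂ = η₂ ^ 2 * (γbar + α₂₀ ^ 2 * γ) * P₀' + α₂₁ ^ 2 * Q₁ + α₂₂ ^ 2 * Q₂)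
    (hσU₂Y₂ : σU₂Y₂ = η₂ ^ 2 * (γbar * P₀' + α₂₀ * γ * P₀') + α₂₂ * (1 + β₂ * η₂) * Q₂
      + α₂₁ * β₁ * η₂ * Q₁)
    (hh₂ : h₂ = σY₂X₂ * σU₂ - σU₂Y₂ ^ 2)
    (hf₂ : f₂ = 1 / 2 * Real.log (η₂ ^ 2 * γbar * P₀' * σY₂ / h₂)) :
    f₂ = 1 / 2 * Real.log (1 + P₂ / (η₂ ^ 2 * P₀ + 2 * η₂ * ρ₂ * Real.sqrt (P₀ * Q₂) + Q₂ + 1))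
      + 1 / 2 * Real.log ((1 - ρ₁ ^ 2 - ρ₂ ^ 2) * η₂ ^ 2 * P₀ + 1) := by
  subst hγ hγbar
  simp only [mul_one, one_mul, mul_zero, zero_mul, add_zero] at hα₂₀ hα₂₁ hα₂₂ hσU₂ hσU₂Y₂ hf₂
  have hsq₁ : β₁ ^ 2 * Q₁ = ρ₁ ^ 2 * P₀ := by
    rw [hβ₁, mul_pow, Real.sq_sqrt (by positivity : (0:ℝ) ≤ P₀ / Q₁)]
    field_simp
  have hsq₂ : β₂ ^ 2 * Q₂ = ρ₂ ^ 2 * P₀ := by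
    rw [hβ₂, mul_pow, Real.sq_sqrt (by positivity : (0:ℝ) ≤ P₀ / Q₂)]
    field_simp
  have hroot : ρ₂ * Real.sqrt (P₀ * Q₂) = β₂ * Q₂ := by
    have h : Real.sqrt (P₀ / Q₂) * Q₂ = Real.sqrt (P₀ * Q₂) := by
      rw [Real.sqrt_div hP₀.le, Real.sqrt_mul hP₀.le, div_mul_eq_mul_div, mul_div_assoc,
        Real.div_sqrt]
    rw [hβ₂, mul_assoc, h]
  have hP₀'pos : 0 < P₀' := by
    rw [hP₀', hsq₁, hsq₂]; nlinarith
  have hs : 0 < η₂ ^ 2 * P₀' := by positivity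
  have hs1 : (0:ℝ) < η₂ ^ 2 * P₀' + 1 := by linarith
  have hk₁ : 0 ≤ β₁ ^ 2 * η₂ ^ 2 * Q₁ := by positivity
  have hk₂ : 0 ≤ (1 + η₂ * β₂) ^ 2 * Q₂ := by positivity
  have hDeq : σY₂X₂ = η₂ ^ 2 * P₀' + (β₁ ^ 2 * η₂ ^ 2 * Q₁ + (1 + η₂ * β₂) ^ 2 * Q₂) + 1 := by
    rw [hσY₂X₂, hP₀']; ring
  have hDpos : 0 < σY₂X₂ := by rw [hDeq]; nlinarith
  have key := stmt_15_aux1 (η₂ ^ 2 * P₀') (β₁ * η₂) (1 + η₂ * β₂) Q₁ Q₂ (ne_of_gt hs1)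
  have hh₂' : h₂ = η₂ ^ 2 * P₀' * σY₂X₂ / (η₂ ^ 2 * P₀' + 1) := by
    rw [hh₂, hσU₂, hσU₂Y₂, hα₂₁, hα₂₂, hDeq]
    linear_combination key
  have hσY₂' : σY₂ = σY₂X₂ + P₂ := by rw [hσY₂, hσY₂X₂]; ring
  have hden : η₂ ^ 2 * P₀ + 2 * η₂ * ρ₂ * Real.sqrt (P₀ * Q₂) + Q₂ + 1 = σY₂X₂ := by
    rw [hσY₂X₂]; linear_combination 2 * η₂ * hroot
  have hterm2 : (1 - ρ₁ ^ 2 - ρ₂ ^ 2) * η₂ ^ 2 * P₀ + 1 = η₂ ^ 2 * P₀' + 1 := by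
    rw [hP₀']; linear_combination η₂ ^ 2 * hsq₁ + η₂ ^ 2 * hsq₂
  rw [hf₂, hh₂', hσY₂', hden, hterm2]
  rw [stmt_15_aux2 _ _ _ (ne_of_gt hs) (ne_of_gt hDpos) (ne_of_gt hs1),
    Real.log_mul (by positivity) (by positivity)]
  ring
end
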